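/- Fix an integer k ≥ 1 and a sequence (p_n) ⊆ (0,1) with n·p_n^k → ∞ and n·p_n^{k+1} → 0 as n → ∞. Then, with f_j computed in X(n,p_n) and f̃_k := −f_{k−1} + f_k − f_{k+1}, one has lim_{n→∞} Var(f_k) / Var(f̃_k) = 1. -/

import Mathlib

/-!
Write `f_j = ∑_S 1[S spans a clique]` over `(j + 1)`-sets `S`. Only pairs `(S, T)` sharing
`m ≥ 2` vertices are correlated, and as `p → 0` those pairs contribute
`Θ(n ^ (2(j+1) - m) * p ^ (2 C(j+1, 2) - C(m, 2)))` to `Var f_j`. Comparing these terms when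
`n p^k → ∞` and `n p^(k+1) → 0` shows that every term of `Var f_{k-1}` and of `Var f_{k+1}` is
`o` of some term of `Var f_k`. Since the standard deviation is subadditive,
`|σ(f̃_k) - σ(f_k)| ≤ σ(f_{k-1}) + σ(f_{k+1}) = o(σ(f_k))`, and the variances are asymptotically
equal.
-/

open MeasureTheory ProbabilityTheory Filter
open scoped Classical Topology

/-- The Bernoulli(p) measure on `Bool` (for `p ∈ [0,1]`). -/
noncomputable def bernoulliMeasure (p : ℝ) : Measure Bool :=
  (PMF.bernoulli (min (Real.toNNReal p) 1) (min_le_right _ _)).toMeasure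

instance (p : ℝ) : IsProbabilityMeasure (bernoulliMeasure p) := by
  unfold _root_.bernoulliMeasure; infer_instance

/-- The Erdős–Rényi measure: each potential edge of the complete graph on `Fin n`
is present independently with probability `p`. -/
noncomputable def erMeasure (n : ℕ) (p : ℝ) : Measure (Sym2 (Fin n) → Bool) :=
  Measure.pi fun _ => bernoulliMeasure p

/-- `cliqueCount n j ω` is the number of `j`-dimensional faces of the clique complex
`X(n,p)`, i.e. the number of `(j+1)`-element vertex subsets spanning a complete
subgraph in the graph encoded by `ω`. -/
noncomputable def cliqueCount (n j : ℕ) (ω : Sym2 (Fin n) → Bool) : ℕ :=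
  (((Finset.univ : Finset (Fin n)).powersetCard (j + 1)).filter
    (fun S => ∀ i ∈ S, ∀ i' ∈ S, i ≠ i' → ω s(i, i') = true)).card

/-- `EfK n j p = E[f_j]`, the expected number of `j`-dimensional faces of `X(n,p)`. -/
noncomputable def EfK (n j : ℕ) (p : ℝ) : ℝ :=
  ∫ ω, (cliqueCount n j ω : ℝ) ∂erMeasure n p

open Finset Asymptotics

section StandardDeviation

variable {Ω : Type*} [MeasurableSpace Ω] {μ : Measure Ω} [IsFiniteMeasure μ] {X Y Z : Ω → ℝ}

-- The quadratic `t ↦ Var[X + t • Y]` is nonnegative, so its discriminant is not positive.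
lemma sq_covariance_le_variance_mul_variance (hX : MemLp X 2 μ) (hY : MemLp Y 2 μ) :
    cov[X, Y; μ] ^ 2 ≤ Var[X; μ] * Var[Y; μ] := by
  have hquad : ∀ t : ℝ, 0 ≤ Var[Y; μ] * (t * t) + 2 * cov[X, Y; μ] * t + Var[X; μ] := by
    intro t
    have h := variance_add hX (hY.const_smul t)
    rw [covariance_smul_right, variance_smul] at h
    nlinarith [variance_nonneg (X + t • Y) μ]
  have hdiscrim := discrim_le_zero hquad
  rw [discrim] at hdiscrim
  nlinarith

lemma sqrt_variance_add_le (hX : MemLp X 2 μ) (hY : MemLp Y 2 μ) :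
    √Var[X + Y; μ] ≤ √Var[X; μ] + √Var[Y; μ] := by
  have hcov : cov[X, Y; μ] ≤ √Var[X; μ] * √Var[Y; μ] := by
    rw [← Real.sqrt_mul (variance_nonneg X μ)]
    exact (le_abs_self _).trans
      (Real.abs_le_sqrt (sq_covariance_le_variance_mul_variance hX hY))
  rw [Real.sqrt_le_iff, variance_add hX hY]
  refine ⟨by positivity, ?_⟩
  nlinarith [Real.sq_sqrt (variance_nonneg X μ), Real.sq_sqrt (variance_nonneg Y μ)]

lemma abs_sqrt_variance_add_sub_le (hX : MemLp X 2 μ) (hY : MemLp Y 2 μ) :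
    |√Var[X + Y; μ] - √Var[X; μ]| ≤ √Var[Y; μ] := by
  have hX' : √Var[X; μ] ≤ √Var[X + Y; μ] + √Var[Y; μ] := by
    simpa [variance_neg] using sqrt_variance_add_le (hX.add hY) hY.neg
  rw [abs_sub_le_iff]
  constructor <;> linarith [sqrt_variance_add_le hX hY]

lemma abs_sqrt_variance_neg_add_sub_le (hX : MemLp X 2 μ) (hY : MemLp Y 2 μ)
    (hZ : MemLp Z 2 μ) :
    |√Var[fun ω => -Y ω + X ω - Z ω; μ] - √Var[X; μ]| ≤ √Var[Y; μ] + √Var[Z; μ] := by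
  have hsplit : (fun ω => -Y ω + X ω - Z ω) = X + -(Y + Z) := by
    ext ω; simp only [Pi.add_apply, Pi.neg_apply]; ring
  calc |√Var[fun ω => -Y ω + X ω - Z ω; μ] - √Var[X; μ]|
      ≤ √Var[-(Y + Z); μ] := hsplit ▸ abs_sqrt_variance_add_sub_le hX (hY.add hZ).neg
    _ ≤ √Var[Y; μ] + √Var[Z; μ] := variance_neg (X := Y + Z) ▸ sqrt_variance_add_le hY hZ

end StandardDeviation

section BernoulliProduct

variable {ι : Type*} {p : ℝ}

def allTrue (A : Finset ι) : Set (ι → Bool) := {ω | ∀ i ∈ A, ω i = true}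

lemma allTrue_union [DecidableEq ι] (A B : Finset ι) :
    allTrue (A ∪ B) = allTrue A ∩ allTrue B := by
  ext ω; simp only [allTrue, mem_union, Set.mem_inter_iff, Set.mem_ofPred_eq]; grind

lemma bernoulliMeasure_real_true (hp0 : 0 ≤ p) (hp1 : p ≤ 1) :
    (_root_.bernoulliMeasure p).real {true} = p := by
  rw [measureReal_def, _root_.bernoulliMeasure,
    PMF.toMeasure_apply_singleton _ _ (measurableSet_singleton _)]
  simp [min_eq_left (Real.toNNReal_le_one.2 hp1), PMF.bernoulli, hp0]

variable [Fintype ι]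

lemma measureReal_pi_bernoulli_allTrue (hp0 : 0 ≤ p) (hp1 : p ≤ 1) (A : Finset ι) :
    (Measure.pi fun _ : ι => _root_.bernoulliMeasure p).real (allTrue A) = p ^ #A := by
  have hcyl : allTrue A = Set.univ.pi fun i => if i ∈ A then {true} else Set.univ := by
    ext ω
    simp only [allTrue, Set.mem_ofPred_eq, Set.mem_pi, Set.mem_univ, true_implies]
    refine forall_congr' fun i => ?_
    split_ifs <;> simp [*]
  rw [hcyl, measureReal_def, Measure.pi_pi, ENNReal.toReal_prod]
  simp_rw [apply_ite, ← measureReal_def, bernoulliMeasure_real_true hp0 hp1, probReal_univ]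
  rw [prod_ite_mem, univ_inter, prod_const]

lemma covariance_indicator_allTrue [DecidableEq ι] (hp0 : 0 ≤ p) (hp1 : p ≤ 1)
    (A B : Finset ι) :
    cov[(allTrue A).indicator 1, (allTrue B).indicator 1;
        Measure.pi fun _ => _root_.bernoulliMeasure p]
      = p ^ #(A ∪ B) - p ^ (#A + #B) := by
  rw [covariance_eq_sub .of_discrete .of_discrete, ← Set.inter_indicator_one, ← allTrue_union,
    integral_indicator_one .of_discrete, integral_indicator_one .of_discrete,
    integral_indicator_one .of_discrete, measureReal_pi_bernoulli_allTrue hp0 hp1,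
    measureReal_pi_bernoulli_allTrue hp0 hp1, measureReal_pi_bernoulli_allTrue hp0 hp1, pow_add]

end BernoulliProduct

section Edges

variable {α : Type*} [DecidableEq α]

def edgesOf (S : Finset α) : Finset (Sym2 α) := S.offDiag.image Sym2.mk.uncurry

lemma mem_edgesOf {S : Finset α} {e : Sym2 α} :
    e ∈ edgesOf S ↔ ¬e.IsDiag ∧ ∀ v ∈ e, v ∈ S := by
  induction e using Sym2.ind with
  | h a b => simp only [edgesOf, mem_image, mem_offDiag]; aesop

lemma forall_mem_edgesOf {S : Finset α} {P : Sym2 α → Prop} :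
    (∀ e ∈ edgesOf S, P e) ↔ ∀ a ∈ S, ∀ b ∈ S, a ≠ b → P s(a, b) := by
  simp only [edgesOf, forall_mem_image, mem_offDiag, and_imp, Prod.forall,
    Function.uncurry_apply_pair]
  exact ⟨fun h a ha b hb => h a b ha hb, fun h a b ha hb => h a ha b hb⟩

lemma edgesOf_inter (S T : Finset α) : edgesOf (S ∩ T) = edgesOf S ∩ edgesOf T := by
  ext e; simp only [mem_inter, mem_edgesOf]; grind

lemma card_edgesOf (S : Finset α) : #(edgesOf S) = (#S).choose 2 :=
  Sym2.card_image_offDiag S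

lemma card_edgesOf_union {S T : Finset α} {a : ℕ} (hS : #S = a) (hT : #T = a) :
    #(edgesOf S ∪ edgesOf T) = 2 * a.choose 2 - (#(S ∩ T)).choose 2 := by
  have h := card_union_add_card_inter (edgesOf S) (edgesOf T)
  rw [← edgesOf_inter, card_edgesOf, card_edgesOf, card_edgesOf, hS, hT] at h
  omega

end Edges

section PairCount

variable (α : Type*) [Fintype α] [DecidableEq α]

def pairsWithInter (a m : ℕ) : Finset (Finset α × Finset α) :=
  {st ∈ univ.powersetCard a ×ˢ univ.powersetCard a | #(st.1 ∩ st.2) = m}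

variable {α}

-- `(S, T) ↦ (S ∩ T, S \ T, T \ S)` is injective.
lemma card_pairsWithInter_le {a m : ℕ} (hm : m ≤ a) :
    #(pairsWithInter α a m) ≤ Fintype.card α ^ (2 * a - m) := by
  set N := Fintype.card α
  calc #(pairsWithInter α a m)
      ≤ #(univ.powersetCard m ×ˢ (univ.powersetCard (a - m) ×ˢ univ.powersetCard (a - m))) := by
        refine card_le_card_of_injOn (fun st => (st.1 ∩ st.2, st.1 \ st.2, st.2 \ st.1)) ?_ ?_
        · rintro ⟨S, T⟩ hST
          simp only [pairsWithInter, coe_filter, Set.mem_ofPred_eq, mem_product,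
            mem_powersetCard_univ] at hST
          have hS := card_sdiff_add_card_inter S T
          have hT := card_sdiff_add_card_inter T S
          rw [inter_comm T S] at hT
          simp only [coe_product, Set.mem_prod, mem_coe, mem_powersetCard_univ]
          omega
        · rintro ⟨S, T⟩ - ⟨S', T'⟩ - h
          simp only [Prod.mk.injEq] at h
          obtain ⟨hi, hS, hT⟩ := h
          refine Prod.ext ?_ ?_
          · rw [← sdiff_union_inter S T, ← sdiff_union_inter S' T', hi, hS]
          · rw [← sdiff_union_inter T S, ← sdiff_union_inter T' S', inter_comm T,
              inter_comm T', hi, hT]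
    _ = N.choose m * (N.choose (a - m) * N.choose (a - m)) := by
        simp [card_powersetCard, N]
    _ ≤ N ^ m * (N ^ (a - m) * N ^ (a - m)) := by
        gcongr <;> exact Nat.choose_le_pow _ _
    _ = N ^ (2 * a - m) := by rw [← pow_add, ← pow_add]; congr 1; omega

-- Every `(2a - m)`-set `U` is `S ∪ T` for some such pair.
lemma choose_le_card_pairsWithInter {a m : ℕ} (hm : m ≤ a) :
    (Fintype.card α).choose (2 * a - m) ≤ #(pairsWithInter α a m) := by
  rw [← card_univ, ← card_powersetCard]
  refine card_le_card_of_surjOn (fun st => st.1 ∪ st.2) fun U hU => ?_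
  rw [mem_coe, mem_powersetCard_univ] at hU
  obtain ⟨S, hSU, hS⟩ := exists_subset_card_eq (s := U) (n := a) (by omega)
  obtain ⟨W, hWS, hW⟩ := exists_subset_card_eq (s := S) (n := m) (by omega)
  have hdisj : Disjoint (U \ S) W := sdiff_disjoint.mono_right hWS
  refine ⟨(S, (U \ S) ∪ W), ?_, ?_⟩
  · have hinter : S ∩ ((U \ S) ∪ W) = W := by
      rw [inter_union_distrib_left, inter_sdiff_self, empty_union, inter_eq_right.2 hWS]
    simp only [pairsWithInter, coe_filter, Set.mem_ofPred_eq, mem_product,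
      mem_powersetCard_univ, hinter, card_union_of_disjoint hdisj, card_sdiff_of_subset hSU]
    omega
  · show S ∪ ((U \ S) ∪ W) = U
    rw [← union_assoc, union_sdiff_of_subset hSU, union_eq_left.2 (hWS.trans hSU)]

end PairCount

instance (n : ℕ) (p : ℝ) : IsProbabilityMeasure (erMeasure n p) := by
  unfold erMeasure; infer_instance

noncomputable def cliqueVariance (n j : ℕ) (p : ℝ) : ℝ :=
  Var[fun ω => (cliqueCount n j ω : ℝ); erMeasure n p]

-- `n ^ #(S ∪ T) * p ^ #(E(S) ∪ E(T))` for two `(j + 1)`-sets `S`, `T` sharing `m` vertices.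
noncomputable def overlapTerm (n j m : ℕ) (p : ℝ) : ℝ :=
  (n : ℝ) ^ (2 * (j + 1) - m) * p ^ (2 * (j + 1).choose 2 - m.choose 2)

section CliqueVariance

variable {n : ℕ} {p : ℝ}

lemma cliqueCount_eq_sum_indicator (j : ℕ) (ω : Sym2 (Fin n) → Bool) :
    (cliqueCount n j ω : ℝ)
      = ∑ S ∈ univ.powersetCard (j + 1), (allTrue (edgesOf S)).indicator 1 ω := by
  rw [cliqueCount, card_filter, Nat.cast_sum]
  refine sum_congr rfl fun S _ => ?_
  simp [Set.indicator_apply, allTrue, forall_mem_edgesOf]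

lemma cliqueVariance_eq_sum_pairs (hp0 : 0 ≤ p) (hp1 : p ≤ 1) (j : ℕ) :
    cliqueVariance n j p
      = ∑ st ∈ (univ : Finset (Fin n)).powersetCard (j + 1) ×ˢ univ.powersetCard (j + 1),
          (p ^ (2 * (j + 1).choose 2 - (#(st.1 ∩ st.2)).choose 2)
            - p ^ (2 * (j + 1).choose 2)) := by
  simp_rw [cliqueVariance, cliqueCount_eq_sum_indicator]
  rw [variance_fun_sum' fun _ _ => .of_discrete, sum_product]
  refine sum_congr rfl fun S hS => sum_congr rfl fun T hT => ?_
  rw [mem_powersetCard_univ] at hS hT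
  rw [erMeasure, covariance_indicator_allTrue hp0 hp1, card_edgesOf_union hS hT, card_edgesOf,
    card_edgesOf, hS, hT, two_mul]

lemma cliqueVariance_eq (hp0 : 0 ≤ p) (hp1 : p ≤ 1) (j : ℕ) :
    cliqueVariance n j p
      = ∑ m ∈ Icc 2 (j + 1), #(pairsWithInter (Fin n) (j + 1) m)
          * (p ^ (2 * (j + 1).choose 2 - m.choose 2) - p ^ (2 * (j + 1).choose 2)) := by
  set g : ℕ → ℝ := fun m => p ^ (2 * (j + 1).choose 2 - m.choose 2) - p ^ (2 * (j + 1).choose 2)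
  have hmaps : ∀ st ∈ (univ : Finset (Fin n)).powersetCard (j + 1) ×ˢ univ.powersetCard (j + 1),
      #(st.1 ∩ st.2) ∈ range (j + 2) := by
    intro st hst
    simp only [mem_product, mem_powersetCard_univ] at hst
    exact mem_range.2 (Nat.lt_succ_of_le (hst.1 ▸ card_le_card inter_subset_left))
  rw [cliqueVariance_eq_sum_pairs hp0 hp1, ← sum_fiberwise_of_maps_to hmaps]
  have hfiber : ∀ m, ∑ st ∈ (univ : Finset (Fin n)).powersetCard (j + 1)
        ×ˢ univ.powersetCard (j + 1) with #(st.1 ∩ st.2) = m, g #(st.1 ∩ st.2)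
      = #(pairsWithInter (Fin n) (j + 1) m) * g m := by
    intro m
    rw [sum_congr rfl fun st hst => by rw [(mem_filter.1 hst).2], sum_const, nsmul_eq_mul]
    rfl
  rw [sum_congr rfl fun m _ => hfiber m]
  -- pairs sharing at most one vertex have disjoint edge sets, hence `g 0 = g 1 = 0`
  refine (sum_subset (fun m hm => ?_) fun m hm hm' => ?_).symm
  · simp only [mem_Icc, mem_range] at hm ⊢; omega
  · simp only [mem_Icc, mem_range] at hm hm'
    simp only [g, Nat.choose_eq_zero_of_lt (n := m) (by omega : m < 2), Nat.sub_zero, sub_self,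
      mul_zero]

lemma cliqueVariance_le_sum_overlapTerm (hp0 : 0 ≤ p) (hp1 : p ≤ 1) (j : ℕ) :
    cliqueVariance n j p ≤ ∑ m ∈ Icc 2 (j + 1), overlapTerm n j m p := by
  rw [cliqueVariance_eq hp0 hp1]
  refine sum_le_sum fun m hm => ?_
  have hcard := card_pairsWithInter_le (α := Fin n) (mem_Icc.1 hm).2
  rw [Fintype.card_fin] at hcard
  exact mul_le_mul (by exact_mod_cast hcard) (sub_le_self _ (by positivity))
    (sub_nonneg.2 (pow_le_pow_of_le_one hp0 hp1 (Nat.sub_le _ _))) (by positivity)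

lemma choose_mul_le_cliqueVariance (hp0 : 0 ≤ p) (hp1 : p ≤ 1) {j m : ℕ} (hm2 : 2 ≤ m)
    (hmj : m ≤ j + 1) :
    n.choose (2 * (j + 1) - m) * ((1 - p) * p ^ (2 * (j + 1).choose 2 - m.choose 2))
      ≤ cliqueVariance n j p := by
  set e := 2 * (j + 1).choose 2 - m.choose 2
  have hnonneg : ∀ i ∈ Icc 2 (j + 1), 0 ≤ (#(pairsWithInter (Fin n) (j + 1) i) : ℝ)
      * (p ^ (2 * (j + 1).choose 2 - i.choose 2) - p ^ (2 * (j + 1).choose 2)) :=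
    fun i _ => mul_nonneg (by positivity)
      (sub_nonneg.2 (pow_le_pow_of_le_one hp0 hp1 (Nat.sub_le _ _)))
  rw [cliqueVariance_eq hp0 hp1]
  refine le_trans ?_ (single_le_sum hnonneg (mem_Icc.2 ⟨hm2, hmj⟩))
  have hcard := choose_le_card_pairsWithInter (α := Fin n) hmj
  rw [Fintype.card_fin] at hcard
  have hpm : p ^ m.choose 2 ≤ p := pow_le_of_le_one hp0 hp1 (Nat.choose_pos hm2).ne'
  have hsplit : p ^ (2 * (j + 1).choose 2) = p ^ e * p ^ m.choose 2 := by
    rw [← pow_add, Nat.sub_add_cancel]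
    exact (Nat.choose_le_choose 2 hmj).trans (Nat.le_mul_of_pos_left _ two_pos)
  have hpe : 0 ≤ p ^ e := pow_nonneg hp0 e
  refine mul_le_mul (by exact_mod_cast hcard) ?_ (mul_nonneg (by linarith) hpe) (by positivity)
  rw [hsplit]
  nlinarith

end CliqueVariance

section Asymptotics

variable {p : ℕ → ℝ}

lemma overlapTerm_isBigO_cliqueVariance (hp : ∀ n, 0 ≤ p n ∧ p n ≤ 1)
    (hp0 : Tendsto p atTop (𝓝 0)) {j m : ℕ} (hm2 : 2 ≤ m) (hmj : m ≤ j + 1) :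
    (fun n => overlapTerm n j m (p n)) =O[atTop] fun n => cliqueVariance n j (p n) := by
  set e := 2 * (j + 1).choose 2 - m.choose 2
  have hone : (fun _ => (1 : ℝ)) =O[atTop] fun n => 1 - p n := by
    rw [isBigO_const_left_iff_pos_le_norm one_ne_zero]
    refine ⟨1 / 2, by norm_num, ?_⟩
    filter_upwards [hp0.eventually (ge_mem_nhds (by norm_num : (0 : ℝ) < 1 / 2))] with n hn
    rw [Real.norm_eq_abs]
    exact le_abs.2 (Or.inl (by linarith))
  have hchoose := (isTheta_choose (2 * (j + 1) - m)).isBigO_symm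
  calc (fun n => overlapTerm n j m (p n))
      = fun n : ℕ => (n : ℝ) ^ (2 * (j + 1) - m) * (1 * p n ^ e) := by simp [overlapTerm, e]
    _ =O[atTop] fun n => (n.choose (2 * (j + 1) - m) : ℝ) * ((1 - p n) * p n ^ e) :=
        hchoose.mul (hone.mul (isBigO_refl _ _))
    _ =O[atTop] fun n => cliqueVariance n j (p n) := by
        refine IsBigO.of_bound 1 (Eventually.of_forall fun n => ?_)
        have hlow := choose_mul_le_cliqueVariance (n := n) (hp n).1 (hp n).2 hm2 hmj
        have hnn : 0 ≤ (n.choose (2 * (j + 1) - m) : ℝ) * ((1 - p n) * p n ^ e) :=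
          mul_nonneg (by positivity) (mul_nonneg (by linarith [(hp n).2]) (pow_nonneg (hp n).1 _))
        rw [Real.norm_of_nonneg hnn, Real.norm_of_nonneg (hnn.trans hlow), one_mul]
        exact hlow

lemma cliqueVariance_isLittleO (hp : ∀ n, 0 ≤ p n ∧ p n ≤ 1) (hp0 : Tendsto p atTop (𝓝 0))
    {j k : ℕ} (hdom : ∀ m ∈ Icc 2 (j + 1), ∃ m' ∈ Icc 2 (k + 1),
      (fun n => overlapTerm n j m (p n)) =o[atTop] fun n => overlapTerm n k m' (p n)) :
    (fun n => cliqueVariance n j (p n)) =o[atTop] fun n => cliqueVariance n k (p n) := by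
  have hsum : (∑ m ∈ Icc 2 (j + 1), fun n => overlapTerm n j m (p n))
      =o[atTop] fun n => cliqueVariance n k (p n) := by
    refine IsLittleO.sum fun m hm => ?_
    obtain ⟨m', hm', hlo⟩ := hdom m hm
    exact hlo.trans_isBigO (overlapTerm_isBigO_cliqueVariance hp hp0 (mem_Icc.1 hm').1
      (mem_Icc.1 hm').2)
  refine IsBigO.trans_isLittleO (IsBigO.of_bound 1 (Eventually.of_forall fun n => ?_)) hsum
  have hle := cliqueVariance_le_sum_overlapTerm (n := n) (hp n).1 (hp n).2 j
  have hnn : 0 ≤ cliqueVariance n j (p n) := variance_nonneg _ _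
  rw [Finset.sum_apply, Real.norm_of_nonneg hnn, Real.norm_of_nonneg (hnn.trans hle), one_mul]
  exact hle

lemma isLittleO_pow_mul_pow_of_tendsto_zero {q a a' e e' d c : ℕ}
    (hx : Tendsto (fun n : ℕ => (n : ℝ) * p n ^ q) atTop (𝓝 0)) (hp0 : Tendsto p atTop (𝓝 0))
    (ha : a = d + a') (he : e = q * d + c + e') (hdc : d + c ≠ 0) :
    (fun n : ℕ => (n : ℝ) ^ a * p n ^ e) =o[atTop] fun n => (n : ℝ) ^ a' * p n ^ e' := by
  rw [isLittleO_iff_exists_eq_mul]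
  refine ⟨fun n => ((n : ℝ) * p n ^ q) ^ d * p n ^ c, ?_, Eventually.of_forall fun n => ?_⟩
  · simpa [← pow_add, zero_pow hdc] using (hx.pow d).mul (hp0.pow c)
  · simp only [Pi.mul_apply, ha, he]
    ring

lemma isLittleO_pow_mul_pow_of_tendsto_atTop {q a a' e e' d : ℕ}
    (hy : Tendsto (fun n : ℕ => (n : ℝ) * p n ^ q) atTop atTop)
    (ha : a' = a + d) (he : e' = e + q * d) (hd : d ≠ 0) :
    (fun n : ℕ => (n : ℝ) ^ a * p n ^ e) =o[atTop] fun n => (n : ℝ) ^ a' * p n ^ e' := by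
  rw [isLittleO_iff_exists_eq_mul]
  refine ⟨fun n => (((n : ℝ) * p n ^ q) ^ d)⁻¹,
    ((tendsto_pow_atTop hd).comp hy).inv_tendsto_atTop, ?_⟩
  filter_upwards [hy.eventually_gt_atTop 0] with n hn
  simp only [Pi.mul_apply, ha, he]
  field_simp
  ring

lemma tendsto_div_of_sqrt_sub_isLittleO {α : Type*} {l : Filter α} {v w : α → ℝ}
    (hv : ∀ᶠ x in l, 0 < v x) (hw : ∀ x, 0 ≤ w x)
    (h : (fun x => √(w x) - √(v x)) =o[l] fun x => √(v x)) :
    Tendsto (fun x => v x / w x) l (𝓝 1) := by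
  have hsqrt : (fun x => √(w x)) ~[l] fun x => √(v x) := h
  have hequiv : w ~[l] v := by
    refine ((hsqrt.pow 2).congr_left (Eventually.of_forall fun x => ?_)).congr_right ?_
    · exact Real.sq_sqrt (hw x)
    · filter_upwards [hv] with x hx using Real.sq_sqrt hx.le
  have hwv := (isEquivalent_iff_tendsto_one (hv.mono fun x hx => hx.ne')).1 hequiv
  simpa using hwv.inv₀ one_ne_zero

end Asymptotics

lemma Nat.choose_two_succ (n : ℕ) : (n + 1).choose 2 = n.choose 2 + n := by
  rw [Nat.choose_succ_succ, Nat.choose_one_right, add_comm]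

section Regime

variable {k : ℕ} {p : ℕ → ℝ}

lemma tendsto_zero_of_mul_pow_tendsto (hp : ∀ n, 0 < p n)
    (h1 : Tendsto (fun n : ℕ => (n : ℝ) * p n ^ k) atTop atTop)
    (h2 : Tendsto (fun n : ℕ => (n : ℝ) * p n ^ (k + 1)) atTop (𝓝 0)) :
    Tendsto p atTop (𝓝 0) := by
  refine (h2.div_atTop h1).congr' ?_
  filter_upwards [eventually_ge_atTop 1] with n hn
  have hn0 : (n : ℝ) ≠ 0 := Nat.cast_ne_zero.2 (by omega)
  rw [pow_succ]
  field_simp [(hp n).ne']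

lemma cliqueVariance_succ_isLittleO (hk : 1 ≤ k) (hp : ∀ n, 0 ≤ p n ∧ p n ≤ 1)
    (hp0 : Tendsto p atTop (𝓝 0))
    (h2 : Tendsto (fun n : ℕ => (n : ℝ) * p n ^ (k + 1)) atTop (𝓝 0)) :
    (fun n => cliqueVariance n (k + 1) (p n)) =o[atTop] fun n => cliqueVariance n k (p n) := by
  refine cliqueVariance_isLittleO hp hp0 fun m hm => ?_
  rw [mem_Icc] at hm
  have hK := Nat.choose_two_succ (k + 1)
  have hK1 : 1 ≤ (k + 1).choose 2 := Nat.choose_pos (by omega)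
  obtain rfl | rfl | ⟨t, rfl⟩ : m = 2 ∨ m = 3 ∨ ∃ t, m = t + 4 := by
    rcases Nat.lt_or_ge m 4 with h | h
    · omega
    · exact Or.inr (Or.inr ⟨m - 4, by omega⟩)
  · -- two sets sharing an edge, versus the same for `f_k`: the ratio is `(n p ^ (k + 1)) ^ 2`
    refine ⟨2, by simp; omega, isLittleO_pow_mul_pow_of_tendsto_zero h2 hp0 (d := 2) (c := 0)
      (by omega) ?_ (by omega)⟩
    simp only [Nat.choose_self]; omega
  · -- two sets sharing a triangle, versus an edge for `f_k`: the ratio is `n p ^ (2k)`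
    refine ⟨2, by simp; omega, isLittleO_pow_mul_pow_of_tendsto_zero h2 hp0 (d := 1)
      (c := k - 1) (by omega) ?_ (by omega)⟩
    simp only [Nat.choose_self, show (3 : ℕ).choose 2 = 3 from rfl]; omega
  · -- `t + 4` shared vertices versus `t + 2`: as many vertices, `2k - 3 - 2t ≥ 1` more edges
    have ht : (t + 4).choose 2 = (t + 3).choose 2 + (t + 3) := Nat.choose_two_succ _
    have ht' : (t + 3).choose 2 = (t + 2).choose 2 + (t + 2) := Nat.choose_two_succ _
    have hle : (t + 2).choose 2 ≤ (k + 1).choose 2 := Nat.choose_le_choose 2 (by omega)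
    exact ⟨t + 2, by simp; omega, isLittleO_pow_mul_pow_of_tendsto_zero h2 hp0 (d := 0)
      (c := 2 * k - 3 - 2 * t) (by omega) (by omega) (by omega)⟩

-- Each term of `Var f_{k-1}` is `(n p ^ k) ^ 2` times smaller than the matching one of `Var f_k`.
lemma cliqueVariance_pred_isLittleO (hk : 1 ≤ k) (hp : ∀ n, 0 ≤ p n ∧ p n ≤ 1)
    (hp0 : Tendsto p atTop (𝓝 0)) (h1 : Tendsto (fun n : ℕ => (n : ℝ) * p n ^ k) atTop atTop) :
    (fun n => cliqueVariance n (k - 1) (p n)) =o[atTop] fun n => cliqueVariance n k (p n) := by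
  refine cliqueVariance_isLittleO hp hp0 fun m hm => ⟨m, ?_, ?_⟩
  all_goals rw [Nat.sub_add_cancel hk, mem_Icc] at hm
  · exact mem_Icc.2 ⟨hm.1, by omega⟩
  · have hK := Nat.choose_two_succ k
    have hle : m.choose 2 ≤ k.choose 2 := Nat.choose_le_choose 2 hm.2
    unfold overlapTerm
    rw [Nat.sub_add_cancel hk]
    exact isLittleO_pow_mul_pow_of_tendsto_atTop h1 (d := 2) (by omega) (by omega) (by omega)

lemma eventually_cliqueVariance_pos (hk : 1 ≤ k) (hp : ∀ n, 0 < p n ∧ p n < 1) :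
    ∀ᶠ n in atTop, 0 < cliqueVariance n k (p n) := by
  filter_upwards [eventually_ge_atTop (2 * (k + 1))] with n hn
  refine lt_of_lt_of_le ?_ (choose_mul_le_cliqueVariance (hp n).1.le (hp n).2.le le_rfl
    (by omega : 2 ≤ k + 1))
  have hchoose : 0 < n.choose (2 * (k + 1) - 2) := Nat.choose_pos (by omega)
  have := (hp n).1
  have := (hp n).2
  positivity

end Regime

/-- for `k ≥ 1` and `p_n ∈ (0,1)` with `n·p_n^k → ∞` and `n·p_n^{k+1} → 0`,
`Var(f_k)/Var(f̃_k) → 1` where `f̃_k = -f_{k-1} + f_k - f_{k+1}`. -/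
theorem variance_ratio_tilde (k : ℕ) (hk : 1 ≤ k) (p : ℕ → ℝ)
    (hp : ∀ n, 0 < p n ∧ p n < 1)
    (h1 : Tendsto (fun n : ℕ => (n : ℝ) * p n ^ k) atTop atTop)
    (h2 : Tendsto (fun n : ℕ => (n : ℝ) * p n ^ (k + 1)) atTop (𝓝 0)) :
    Tendsto (fun n : ℕ =>
        variance (fun ω => (cliqueCount n k ω : ℝ)) (erMeasure n (p n)) /
        variance (fun ω =>
            -(cliqueCount n (k - 1) ω : ℝ) + (cliqueCount n k ω : ℝ)
              - (cliqueCount n (k + 1) ω : ℝ)) (erMeasure n (p n)))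
      atTop (𝓝 1) := by
  have hp0 := tendsto_zero_of_mul_pow_tendsto (fun n => (hp n).1) h1 h2
  have hp' : ∀ n, 0 ≤ p n ∧ p n ≤ 1 := fun n => ⟨(hp n).1.le, (hp n).2.le⟩
  have hnonneg : 0 ≤ᶠ[atTop] fun n => cliqueVariance n k (p n) :=
    Eventually.of_forall fun n => variance_nonneg _ _
  have hsmall :
      (fun n => √(cliqueVariance n (k - 1) (p n)) + √(cliqueVariance n (k + 1) (p n)))
        =o[atTop] fun n => √(cliqueVariance n k (p n)) :=
    ((cliqueVariance_pred_isLittleO hk hp' hp0 h1).sqrt hnonneg).add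
      ((cliqueVariance_succ_isLittleO hk hp' hp0 h2).sqrt hnonneg)
  refine tendsto_div_of_sqrt_sub_isLittleO (eventually_cliqueVariance_pos hk hp)
    (fun n => variance_nonneg _ _) (IsBigO.trans_isLittleO ?_ hsmall)
  refine IsBigO.of_bound 1 (Eventually.of_forall fun n => ?_)
  rw [one_mul, Real.norm_eq_abs, Real.norm_of_nonneg (by positivity)]
  exact abs_sqrt_variance_neg_add_sub_le .of_discrete .of_discrete .of_discrete
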